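/- arXiv:1906.04866 — 2 statements merged into one kernel-verified Lean document; each statement's English description precedes it below -/
import Mathlib

section
/- Let A be a real m×n matrix whose largest singular value σ = σ_max(A) is positive and simple, meaning that the largest eigenvalue of AᵀA has multiplicity one (it is attained by exactly one index in the list of eigenvalues of AᵀA counted with multiplicity). Let u ∈ ℝᵐ and v ∈ ℝⁿ be unit vectors with Av = σu and Aᵀu = σv (normalized left and right singular vectors for σ). Then the function B ↦ ‖B‖, where ‖·‖ is the ℓ2 operator norm on m×n real matrices (equal to the largest singular value), is Fréchet differentiable at A with derivative the linear map H ↦ uᵀHv. In particular, ∂σ_max/∂a_{ij} = u(i)·v(j). -/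
open Matrix
open scoped Matrix.Norms.L2Operator RealInnerProductSpace

noncomputable def toE {k : ℕ} (x : Fin k → ℝ) : EuclideanSpace ℝ (Fin k) :=
  (WithLp.equiv 2 (Fin k → ℝ)).symm x

lemma inner_toE {k : ℕ} (x y : Fin k → ℝ) : ⟪toE x, toE y⟫ = x ⬝ᵥ y := by
  simpa [toE, dotProduct_comm] using EuclideanSpace.inner_toLp_toLp (𝕜 := ℝ) x y

lemma toE_add {k : ℕ} (x y : Fin k → ℝ) : toE (x + y) = toE x + toE y := by
  simp [toE]

lemma toE_smul {k : ℕ} (c : ℝ) (x : Fin k → ℝ) : toE (c • x) = c • toE x := by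
  simp [toE]

noncomputable def matCLM {m n : ℕ} (B : Matrix (Fin m) (Fin n) ℝ) :
    EuclideanSpace ℝ (Fin n) →L[ℝ] EuclideanSpace ℝ (Fin m) :=
  (Matrix.toEuclideanLin.trans LinearMap.toContinuousLinearMap) B

lemma norm_matCLM {m n : ℕ} (B : Matrix (Fin m) (Fin n) ℝ) : ‖matCLM B‖ = ‖B‖ := rfl

lemma matCLM_toE {m n : ℕ} (B : Matrix (Fin m) (Fin n) ℝ) (x : Fin n → ℝ) :
    matCLM B (toE x) = toE (B *ᵥ x) := rfl

lemma matCLM_add {m n : ℕ} (B C : Matrix (Fin m) (Fin n) ℝ) :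
    matCLM (B + C) = matCLM B + matCLM C := by
  simp [matCLM, map_add]

lemma matCLM_le {m n : ℕ} (B : Matrix (Fin m) (Fin n) ℝ) (x : EuclideanSpace ℝ (Fin n)) :
    ‖matCLM B x‖ ≤ ‖B‖ * ‖x‖ := by
  simpa [norm_matCLM] using (matCLM B).le_opNorm x

lemma exists_max_vec {m n : ℕ} (hn : 0 < n) (B : Matrix (Fin m) (Fin n) ℝ) :
    ∃ x : EuclideanSpace ℝ (Fin n), ‖x‖ = 1 ∧ ‖matCLM B x‖ = ‖B‖ := by
  have hsph : (Metric.sphere (0 : EuclideanSpace ℝ (Fin n)) 1).Nonempty := by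
    refine ⟨EuclideanSpace.single ⟨0, hn⟩ (1 : ℝ), ?_⟩
    simp [EuclideanSpace.norm_single]
  obtain ⟨x, hx, hmax⟩ := (isCompact_sphere (0 : EuclideanSpace ℝ (Fin n)) 1).exists_isMaxOn
    hsph ((continuous_norm.comp (matCLM B).continuous).continuousOn)
  have hx1 : ‖x‖ = 1 := by simpa using hx
  refine ⟨x, hx1, le_antisymm ?_ ?_⟩
  · calc ‖matCLM B x‖ ≤ ‖matCLM B‖ * ‖x‖ := (matCLM B).le_opNorm x
    _ = ‖B‖ := by rw [hx1, norm_matCLM, mul_one]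
  · rw [← norm_matCLM]
    refine ContinuousLinearMap.opNorm_le_bound _ (norm_nonneg _) fun z => ?_
    rcases eq_or_ne z 0 with rfl | hz
    · simp
    · have hzpos : (0:ℝ) < ‖z‖ := norm_pos_iff.2 hz
      have hw : (‖z‖⁻¹ • z) ∈ Metric.sphere (0 : EuclideanSpace ℝ (Fin n)) 1 := by
        simp [norm_smul, abs_of_pos (inv_pos.2 hzpos), inv_mul_cancel₀ hzpos.ne']
      have := hmax hw
      simp only [Set.mem_setOf_eq, _root_.map_smul, norm_smul, norm_inv, norm_norm,
        Function.comp_apply] at this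
      calc ‖matCLM B z‖ = ‖z‖ * (‖z‖⁻¹ * ‖matCLM B z‖) := by
            field_simp
      _ ≤ ‖z‖ * ‖matCLM B x‖ := by
            exact mul_le_mul_of_nonneg_left this (norm_nonneg _)
      _ = ‖matCLM B x‖ * ‖z‖ := mul_comm _ _

lemma quad_eq {m n : ℕ} (A : Matrix (Fin m) (Fin n) ℝ) (x : EuclideanSpace ℝ (Fin n)) :
    ⟪x, Matrix.toEuclideanLin (Aᵀ * A) x⟫ = ‖matCLM A x‖ ^ 2 := by
  obtain ⟨x', rfl⟩ := (WithLp.equiv 2 (Fin n → ℝ)).symm.surjective x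
  have h1 : Matrix.toEuclideanLin (Aᵀ * A) (toE x') = toE ((Aᵀ * A) *ᵥ x') := rfl
  rw [show (WithLp.equiv 2 (Fin n → ℝ)).symm x' = toE x' from rfl, h1, inner_toE, matCLM_toE]
  have h2 : ‖toE (A *ᵥ x')‖ ^ 2 = (A *ᵥ x') ⬝ᵥ (A *ᵥ x') := by
    rw [← inner_toE]
    exact (real_inner_self_eq_norm_sq _).symm
  rw [h2, ← Matrix.mulVec_mulVec, Matrix.dotProduct_mulVec, Matrix.vecMul_transpose]

lemma gap_lemma {m n : ℕ} (A : Matrix (Fin m) (Fin n) ℝ)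
    (hpos : 0 < ‖A‖)
    (hAA : (Aᵀ * A).IsHermitian)
    (hsimple : ∃! i : Fin n, hAA.eigenvalues i = ⨆ j, hAA.eigenvalues j)
    (v : Fin n → ℝ) (hv : v ⬝ᵥ v = 1)
    (hAvv : (Aᵀ * A) *ᵥ v = (‖A‖ ^ 2) • v) :
    ∃ μ : ℝ, 0 ≤ μ ∧ μ < ‖A‖ ^ 2 ∧
      ∀ x : EuclideanSpace ℝ (Fin n), ⟪toE v, x⟫ = 0 → ‖matCLM A x‖ ^ 2 ≤ μ * ‖x‖ ^ 2 := by
  classical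
  set σ := ‖A‖ with hσ
  set T := Matrix.toEuclideanLin (Aᵀ * A) with hT
  have hsym : T.IsSymmetric := Matrix.isHermitian_iff_isSymmetric.1 hAA
  set b := hAA.eigenvectorBasis with hb
  set lam := hAA.eigenvalues with hlam
  set V := toE v with hV
  have hVnorm : ‖V‖ = 1 := by
    have : ‖V‖ ^ 2 = 1 := by rw [← real_inner_self_eq_norm_sq, hV, inner_toE, hv]
    nlinarith [norm_nonneg V]
  have hTV : T V = σ ^ 2 • V := by
    have : T V = toE ((Aᵀ * A) *ᵥ v) := rfl
    rw [this, hAvv, toE_smul]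
  have hTb : ∀ j, T (b j) = lam j • b j := by
    intro j
    have h0 := hAA.mulVec_eigenvectorBasis j
    have : T (b j) = toE ((Aᵀ * A) *ᵥ (WithLp.equiv 2 (Fin n → ℝ) (b j))) := rfl
    rw [this]
    have h1 : (Aᵀ * A) *ᵥ (WithLp.equiv 2 (Fin n → ℝ) (b j)) = lam j • (WithLp.equiv 2 (Fin n → ℝ) (b j)) := h0
    rw [h1, toE_smul]
    congr 1
  -- coefficients
  have hkey : ∀ j, lam j * (b.repr V j) = σ ^ 2 * (b.repr V j) := by
    intro j
    have h1 : ⟪T (b j), V⟫ = ⟪b j, T V⟫ := hsym (b j) V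
    rw [hTb j, hTV, real_inner_smul_left, real_inner_smul_right] at h1
    rw [b.repr_apply_apply]
    exact h1
  have hBnorm : ∀ j, ‖b j‖ = 1 := fun j => b.orthonormal.1 j
  have hle : ∀ j, lam j ≤ σ ^ 2 := by
    intro j
    have h1 : ⟪b j, T (b j)⟫ = lam j := by
      rw [hTb j, real_inner_smul_right, real_inner_self_eq_norm_sq, hBnorm j]
      ring
    have h2 : ‖matCLM A (b j)‖ ^ 2 ≤ σ ^ 2 := by
      have := matCLM_le A (b j)
      rw [hBnorm j, mul_one] at this
      nlinarith [norm_nonneg (matCLM A (b j))]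
    rw [← h1, quad_eq]
    exact h2
  have hex : ∃ j, b.repr V j ≠ 0 := by
    by_contra h
    push_neg at h
    have : b.repr V = 0 := by
      ext j; exact h j
    have : V = 0 := by
      have := b.repr.injective (by rw [this, map_zero] : b.repr V = b.repr 0)
      exact this
    rw [this, norm_zero] at hVnorm
    norm_num at hVnorm
  obtain ⟨j₀, hj₀⟩ := hex
  have hj₀eig : lam j₀ = σ ^ 2 := by
    have := hkey j₀
    exact mul_right_cancel₀ hj₀ this
  have hne : Nonempty (Fin n) := ⟨j₀⟩
  have hsup : (⨆ j, lam j) = σ ^ 2 := by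
    apply le_antisymm (ciSup_le hle)
    rw [← hj₀eig]
    exact le_ciSup (Set.Finite.bddAbove (Set.finite_range lam)) j₀
  obtain ⟨istar, histar, huniq⟩ := hsimple
  have histar' : lam istar = σ ^ 2 := by rw [← hsup]; exact histar
  have hstrict : ∀ j, j ≠ istar → lam j < σ ^ 2 := by
    intro j hj
    refine lt_of_le_of_ne (hle j) fun h => hj (huniq j ?_)
    rw [hsup]; exact h
  have hcj : ∀ j, j ≠ istar → b.repr V j = 0 := by
    intro j hj
    have := hkey j
    have h2 : (lam j - σ ^ 2) * b.repr V j = 0 := by ring_nf; linarith [this]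
    rcases mul_eq_zero.1 h2 with h | h
    · exact absurd (by linarith : lam j = σ ^ 2) (ne_of_lt (hstrict j hj))
    · exact h
  have hcistar : b.repr V istar ≠ 0 := by
    rcases eq_or_ne j₀ istar with rfl | h
    · exact hj₀
    · exact absurd (hcj j₀ h) hj₀
  -- inner products in coordinates
  have hinner_coord : ∀ x y : EuclideanSpace ℝ (Fin n),
      ⟪x, y⟫ = ∑ j, (b.repr x j) * (b.repr y j) := by
    intro x y
    rw [← b.repr.inner_map_map x y]
    rw [PiLp.inner_apply]
    simp
    exact Finset.sum_congr rfl fun _ _ => mul_comm _ _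
  have hreprT : ∀ (x : EuclideanSpace ℝ (Fin n)) (j : Fin n),
      b.repr (T x) j = lam j * b.repr x j := by
    intro x j
    rw [b.repr_apply_apply, ← hsym (b j) x, hTb j, real_inner_smul_left, b.repr_apply_apply]
  have hquad_coord : ∀ x : EuclideanSpace ℝ (Fin n),
      ‖matCLM A x‖ ^ 2 = ∑ j, lam j * (b.repr x j) ^ 2 := by
    intro x
    rw [← quad_eq, hinner_coord x (T x)]
    congr 1; ext j; rw [hreprT]; ring
  have hnorm_coord : ∀ x : EuclideanSpace ℝ (Fin n),
      ‖x‖ ^ 2 = ∑ j, (b.repr x j) ^ 2 := by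
    intro x
    rw [← real_inner_self_eq_norm_sq, hinner_coord]
    congr 1; ext j; ring
  have hperp_coord : ∀ x : EuclideanSpace ℝ (Fin n), ⟪V, x⟫ = 0 → b.repr x istar = 0 := by
    intro x hx
    rw [hinner_coord V x] at hx
    rw [Finset.sum_eq_single istar] at hx
    · rcases mul_eq_zero.1 hx with h | h
      · exact absurd h hcistar
      · exact h
    · intro j _ hj
      rw [hcj j hj, zero_mul]
    · intro h
      exact absurd (Finset.mem_univ istar) h
  by_cases hcase : (Finset.univ.erase istar).Nonempty
  · set μ₀ := (Finset.univ.erase istar).sup' hcase lam with hμ₀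
    refine ⟨max μ₀ 0, le_max_right _ _, ?_, ?_⟩
    · rw [max_lt_iff]
      constructor
      · rw [Finset.sup'_lt_iff]
        intro j hj
        exact hstrict j (Finset.ne_of_mem_erase hj)
      · positivity
    · intro x hx
      rw [hquad_coord, hnorm_coord, Finset.mul_sum]
      apply Finset.sum_le_sum
      intro j _
      rcases eq_or_ne j istar with rfl | hj
      · rw [hperp_coord x hx]
        simp
      · have h1 : lam j ≤ max μ₀ 0 :=
          le_max_of_le_left (Finset.le_sup' lam (Finset.mem_erase.2 ⟨hj, Finset.mem_univ j⟩))
        nlinarith [sq_nonneg (b.repr x j)]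
  · refine ⟨0, le_refl _, by positivity, ?_⟩
    intro x hx
    have hall : ∀ j, b.repr x j = 0 := by
      intro j
      rcases eq_or_ne j istar with rfl | hj
      · exact hperp_coord x hx
      · have hempty : Finset.univ.erase istar = ∅ := Finset.not_nonempty_iff_eq_empty.1 hcase
        have hmem : j ∈ Finset.univ.erase istar := Finset.mem_erase.2 ⟨hj, Finset.mem_univ j⟩
        rw [hempty] at hmem
        exact absurd hmem (Finset.notMem_empty j)
    rw [hquad_coord, hnorm_coord]
    simp [hall]

lemma norm_toE_eq_one {k : ℕ} (x : Fin k → ℝ) (h : x ⬝ᵥ x = 1) : ‖toE x‖ = 1 := by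
  have h2 : ‖toE x‖ ^ 2 = 1 := by rw [← real_inner_self_eq_norm_sq, inner_toE, h]
  nlinarith [norm_nonneg (toE x)]


private lemma arith1 {σ ε μ g c q1 q2 : ℝ} (hg : g = σ^2 - μ)
    (e1 : (σ - 2*ε)^2 ≤ q1^2) (h2 : q1^2 = c^2*σ^2 + q2^2)
    (h3 : q2^2 ≤ μ*(1-c^2)) (hε : 0 ≤ ε) :
    g * (1 - c^2) ≤ 4*σ*ε := by nlinarith [sq_nonneg ε]

private lemma arith2 {g t c σ ε : ℝ} (e1 : t^2 = 2 - 2*c) (hc0 : 0 ≤ c) (hc1 : c ≤ 1)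
    (hg : 0 < g) (h5 : g*(1-c^2) ≤ 4*σ*ε) : g*t^2 ≤ 8*σ*ε := by
  nlinarith [mul_nonneg (mul_nonneg hg.le hc0) (sub_nonneg.2 hc1)]

private lemma arith3 {g t σ ε ε' : ℝ} (h : g*t^2 ≤ 8*σ*ε) (hε : ε ≤ (ε'/6)^2 * g/(8*σ))
    (hg : 0 < g) (hσ : 0 < σ) (ht : 0 ≤ t) (hε' : 0 < ε') : t ≤ ε'/6 := by
  have h8 : (0:ℝ) < 8*σ := by positivity
  have e : 8*σ*ε ≤ g*(ε'/6)^2 := by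
    calc 8*σ*ε ≤ 8*σ*((ε'/6)^2*g/(8*σ)) := mul_le_mul_of_nonneg_left hε h8.le
    _ = g*(ε'/6)^2 := by field_simp
  have h2 : t^2 ≤ (ε'/6)^2 := le_of_mul_le_mul_left (by linarith) hg
  nlinarith

private lemma arith4 {β σ dv w t ε ε' iA iH : ℝ}
    (hβ : β = iA + iH) (h10 : iA ≤ σ) (h11 : iH ≤ dv + w*ε + ε*t)
    (hw : w ≤ 2*t + 4*ε/σ) (hδ2 : ε ≤ σ*ε'/8) (ht : t ≤ ε'/6)
    (hε0 : 0 ≤ ε) (hσ : 0 < σ) (hε' : 0 < ε') (ht0 : 0 ≤ t) :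
    β ≤ σ + dv + ε'*ε := by
  have k2 : 4*ε/σ ≤ ε'/2 := by
    rw [div_le_div_iff₀ hσ (by norm_num : (0:ℝ) < 2)]
    nlinarith
  have k1 : 3*t + 4*ε/σ ≤ ε' := by linarith
  have k3 : (2*t + 4*ε/σ)*ε + ε*t ≤ ε'*ε := by
    nlinarith [mul_le_mul_of_nonneg_right k1 hε0]
  have k4 : w*ε ≤ (2*t+4*ε/σ)*ε := mul_le_mul_of_nonneg_right hw hε0
  linarith

lemma upper_bound {m n : ℕ} (A : Matrix (Fin m) (Fin n) ℝ)
    (hpos : 0 < ‖A‖)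
    (hAA : (Aᵀ * A).IsHermitian)
    (hsimple : ∃! i : Fin n, hAA.eigenvalues i = ⨆ j, hAA.eigenvalues j)
    (u : Fin m → ℝ) (v : Fin n → ℝ)
    (hu : u ⬝ᵥ u = 1) (hv : v ⬝ᵥ v = 1)
    (hAv : A *ᵥ v = ‖A‖ • u) (hATu : Aᵀ *ᵥ u = ‖A‖ • v) :
    ∀ ε' : ℝ, 0 < ε' → ∃ δ : ℝ, 0 < δ ∧ ∀ H : Matrix (Fin m) (Fin n) ℝ, ‖H‖ ≤ δ →
      ‖A + H‖ ≤ ‖A‖ + u ⬝ᵥ (H *ᵥ v) + ε' * ‖H‖ := by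
  intro ε' hε'
  set σ := ‖A‖ with hσ
  clear_value σ
  have hn : 0 < n := by
    rcases Nat.eq_zero_or_pos n with rfl | hn
    · exfalso; simp [dotProduct] at hv
    · exact hn
  have hAvv : (Aᵀ * A) *ᵥ v = (‖A‖ ^ 2) • v := by
    rw [← Matrix.mulVec_mulVec, hAv, Matrix.mulVec_smul, hATu, smul_smul, sq, ← hσ]
  obtain ⟨μ, hμ0, hμlt, hgapμ⟩ :=
    gap_lemma A (hσ ▸ hpos) hAA hsimple v hv hAvv
  rw [← hσ] at hμlt
  set g := σ ^ 2 - μ with hg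
  clear_value g
  have hgpos : 0 < g := by rw [hg]; nlinarith
  set U := toE u with hU
  clear_value U
  set V := toE v with hV
  clear_value V
  have hUn : ‖U‖ = 1 := by rw [hU]; exact norm_toE_eq_one u hu
  have hVn : ‖V‖ = 1 := by rw [hV]; exact norm_toE_eq_one v hv
  have hmAV : matCLM A V = σ • U := by
    rw [hV, matCLM_toE, hAv, toE_smul, hU, hσ]
  have hnAV : ‖matCLM A V‖ = σ := by
    rw [hmAV, norm_smul, hUn, mul_one, Real.norm_eq_abs, abs_of_pos hpos]
  have hd1 : (0:ℝ) < σ/4 := by linarith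
  have hd2 : (0:ℝ) < σ*ε'/8 := by positivity
  have hd3 : (0:ℝ) < (ε'/6)^2 * g / (8*σ) := by positivity
  refine ⟨min (σ/4) (min (σ*ε'/8) ((ε'/6)^2 * g / (8*σ))),
    lt_min hd1 (lt_min hd2 hd3), ?_⟩
  intro H hH
  set ε := ‖H‖ with hε
  clear_value ε
  have hε0 : 0 ≤ ε := by rw [hε]; exact norm_nonneg H
  have hδ1 : ε ≤ σ/4 := le_trans hH (min_le_left _ _)
  have hδ2 : ε ≤ σ*ε'/8 := le_trans hH (le_trans (min_le_right _ _) (min_le_left _ _))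
  have hδ3 : ε ≤ (ε'/6)^2 * g / (8*σ) :=
    le_trans hH (le_trans (min_le_right _ _) (min_le_right _ _))
  set B := A + H with hB
  clear_value B
  have hmB : ∀ z : EuclideanSpace ℝ (Fin n), matCLM B z = matCLM A z + matCLM H z := by
    intro z; rw [hB, matCLM_add]; rfl
  have hmH : ∀ z : EuclideanSpace ℝ (Fin n), ‖matCLM H z‖ ≤ ε * ‖z‖ := by
    intro z; rw [hε]; exact matCLM_le H z
  have h1 : σ - ε ≤ ‖B‖ := by
    have e1 : ‖matCLM A V‖ ≤ ‖matCLM B V‖ + ‖matCLM H V‖ := by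
      have e0 : matCLM A V = matCLM B V - matCLM H V := by rw [hmB V]; abel
      rw [e0]; exact norm_sub_le _ _
    have e2 : ‖matCLM H V‖ ≤ ε := by simpa [hVn] using hmH V
    have e3 : ‖matCLM B V‖ ≤ ‖B‖ := by simpa [hVn] using matCLM_le B V
    rw [hnAV] at e1; linarith
  set β := ‖B‖ with hβ
  clear_value β
  have hβ34 : 3/4 * σ ≤ β := by linarith
  have hβpos : 0 < β := by linarith
  obtain ⟨x, hx1, hx2, hc0⟩ :
      ∃ x : EuclideanSpace ℝ (Fin n), ‖x‖ = 1 ∧ ‖matCLM B x‖ = β ∧ 0 ≤ ⟪V, x⟫ := by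
    obtain ⟨x, hx1, hx2⟩ := exists_max_vec hn B
    rcases le_or_gt 0 ⟪V, x⟫ with h | h
    · exact ⟨x, hx1, by rw [hβ]; exact hx2, h⟩
    · refine ⟨-x, by simpa using hx1, ?_, ?_⟩
      · rw [map_neg, norm_neg, hβ]; exact hx2
      · rw [inner_neg_right]; linarith
  set c := ⟪V, x⟫ with hc
  clear_value c
  have hc1 : c ≤ 1 := by
    have e := real_inner_le_norm V x
    rw [hVn, hx1, one_mul] at e
    rw [hc]; exact e
  have hxV : ⟪x, V⟫ = c := by rw [hc]; exact (real_inner_comm x V).symm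
  have h2 : σ - 2*ε ≤ ‖matCLM A x‖ := by
    have e1 : ‖matCLM B x‖ ≤ ‖matCLM A x‖ + ‖matCLM H x‖ := by
      rw [hmB x]; exact norm_add_le _ _
    have e2 : ‖matCLM H x‖ ≤ ε := by simpa [hx1] using hmH x
    rw [hx2] at e1; linarith
  have hAx_le : ‖matCLM A x‖ ≤ σ := by
    have := matCLM_le A x
    rwa [hx1, mul_one, ← hσ] at this
  set xp := x - c • V with hxp
  clear_value xp
  have hxpV : ⟪V, xp⟫ = 0 := by
    rw [hxp, inner_sub_right, real_inner_smul_right, real_inner_self_eq_norm_sq, hVn, ← hc]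
    ring
  have hxpn : ‖xp‖ ^ 2 = 1 - c ^ 2 := by
    rw [hxp, @norm_sub_sq_real, hx1, real_inner_smul_right, hxV, norm_smul, hVn]
    simp only [Real.norm_eq_abs, mul_pow, sq_abs, one_pow, mul_one]
    ring
  have horth : ⟪matCLM A V, matCLM A xp⟫ = 0 := by
    obtain ⟨xp', hxp'⟩ : ∃ w, xp = toE w :=
      ⟨WithLp.equiv 2 _ xp, ((WithLp.equiv 2 _).symm_apply_apply xp).symm⟩
    rw [hmAV, real_inner_smul_left, hxp', hU, matCLM_toE, inner_toE]
    have e1 : u ⬝ᵥ (A *ᵥ xp') = (σ • v) ⬝ᵥ xp' := by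
      rw [Matrix.dotProduct_mulVec, ← Matrix.mulVec_transpose, hATu]
    rw [e1, smul_dotProduct]
    have e2 : v ⬝ᵥ xp' = 0 := by rw [← inner_toE, ← hV, ← hxp']; exact hxpV
    rw [e2]; simp
  have hAx2 : ‖matCLM A x‖ ^ 2 = c ^ 2 * σ ^ 2 + ‖matCLM A xp‖ ^ 2 := by
    have hxsum : x = c • V + xp := by rw [hxp]; abel
    have e0 : matCLM A x = c • matCLM A V + matCLM A xp := by
      conv_lhs => rw [hxsum]
      rw [map_add, ContinuousLinearMap.map_smul]
    rw [e0, @norm_add_sq_real, real_inner_smul_left, horth, norm_smul, hnAV]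
    simp only [Real.norm_eq_abs, mul_pow, sq_abs, one_pow, mul_one, mul_zero]
    ring
  have hgapx : ‖matCLM A xp‖ ^ 2 ≤ μ * (1 - c ^ 2) := by
    have e := hgapμ xp hxpV
    rwa [hxpn] at e
  set q1 := ‖matCLM A x‖ with hq1
  clear_value q1
  set q2 := ‖matCLM A xp‖ with hq2
  clear_value q2
  have h5 : g * (1 - c ^ 2) ≤ 4 * σ * ε := by
    have hσ2ε : 0 ≤ σ - 2*ε := by linarith
    have e1 : (σ - 2*ε) ^ 2 ≤ q1 ^ 2 := pow_le_pow_left₀ hσ2ε h2 2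
    exact arith1 hg e1 hAx2 hgapx hε0
  set t := ‖x - V‖ with ht
  clear_value t
  have ht0 : 0 ≤ t := by rw [ht]; exact norm_nonneg _
  have ht2 : g * t ^ 2 ≤ 8 * σ * ε := by
    have e1 : t ^ 2 = 2 - 2 * c := by
      rw [ht, @norm_sub_sq_real, hx1, hVn, hxV]; ring
    exact arith2 e1 hc0 hc1 hgpos h5
  have htle : t ≤ ε' / 6 := arith3 ht2 hδ3 hgpos hpos ht0 hε'
  have h7 : ‖matCLM B x - σ • U‖ ≤ σ * t + ε := by
    have e0 : matCLM B x - σ • U = matCLM A (x - V) + matCLM H x := by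
      rw [hmB x, map_sub, ← hmAV]; abel
    rw [e0]
    have e1 : ‖matCLM A (x - V)‖ ≤ σ * t := by
      have := matCLM_le A (x - V)
      rwa [← hσ, ← ht] at this
    have e2 : ‖matCLM H x‖ ≤ ε := by simpa [hx1] using hmH x
    calc ‖matCLM A (x - V) + matCLM H x‖
        ≤ ‖matCLM A (x - V)‖ + ‖matCLM H x‖ := norm_add_le _ _
    _ ≤ σ * t + ε := by linarith
  have habs : |σ - β| ≤ ε := by
    have e := abs_norm_sub_norm_le A B
    have e2 : A - B = -H := by rw [hB]; abel
    rwa [e2, norm_neg, ← hσ, ← hβ, ← hε] at e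
  have h8 : ‖matCLM B x - β • U‖ ≤ σ * t + 2 * ε := by
    have e0 : matCLM B x - β • U = (matCLM B x - σ • U) + (σ - β) • U := by
      rw [sub_smul]; abel
    rw [e0]
    have e1 : ‖(σ - β) • U‖ ≤ ε := by
      rw [norm_smul, hUn, mul_one, Real.norm_eq_abs]; exact habs
    calc ‖(matCLM B x - σ • U) + (σ - β) • U‖
        ≤ ‖matCLM B x - σ • U‖ + ‖(σ - β) • U‖ := norm_add_le _ _
    _ ≤ σ * t + 2 * ε := by linarith
  set y := β⁻¹ • matCLM B x with hy
  clear_value y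
  have hyn : ‖y‖ = 1 := by
    rw [hy, norm_smul, hx2, Real.norm_eq_abs, abs_of_pos (inv_pos.2 hβpos),
      inv_mul_cancel₀ hβpos.ne']
  have hyU : ‖y - U‖ ≤ 2 * t + 4 * ε / σ := by
    have e0 : y - U = β⁻¹ • (matCLM B x - β • U) := by
      rw [smul_sub, smul_smul, inv_mul_cancel₀ hβpos.ne', one_smul, hy]
    have e1 : ‖y - U‖ ≤ β⁻¹ * (σ * t + 2 * ε) := by
      rw [e0, norm_smul, Real.norm_eq_abs, abs_of_pos (inv_pos.2 hβpos)]
      exact mul_le_mul_of_nonneg_left h8 (le_of_lt (inv_pos.2 hβpos))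
    have e2 : β⁻¹ ≤ 2 / σ := by
      have hσ2 : σ / 2 ≤ β := by linarith
      have e := inv_anti₀ (by linarith : (0:ℝ) < σ / 2) hσ2
      rwa [inv_div] at e
    have e3 : (0:ℝ) ≤ σ * t + 2 * ε := by
      have := mul_nonneg hpos.le ht0
      linarith
    calc ‖y - U‖ ≤ β⁻¹ * (σ * t + 2 * ε) := e1
    _ ≤ (2/σ) * (σ * t + 2 * ε) := mul_le_mul_of_nonneg_right e2 e3
    _ = 2 * t + 4 * ε / σ := by field_simp; ring
  have h9 : β = ⟪y, matCLM B x⟫ := by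
    rw [hy, real_inner_smul_left, real_inner_self_eq_norm_sq, hx2, sq, ← mul_assoc,
      inv_mul_cancel₀ hβpos.ne', one_mul]
  have h10 : ⟪y, matCLM A x⟫ ≤ σ := by
    have e := real_inner_le_norm y (matCLM A x)
    rw [hyn, one_mul, ← hq1] at e
    linarith [h2, hAx_le]
  have h11 : ⟪y, matCLM H x⟫ ≤ u ⬝ᵥ (H *ᵥ v) + ‖y - U‖ * ε + ε * t := by
    have e0 : ⟪y, matCLM H x⟫ =
        ⟪U, matCLM H V⟫ + ⟪y - U, matCLM H x⟫ + ⟪U, matCLM H (x - V)⟫ := by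
      rw [inner_sub_left, map_sub, inner_sub_right]; ring
    have e1 : ⟪U, matCLM H V⟫ = u ⬝ᵥ (H *ᵥ v) := by
      rw [hU, hV, matCLM_toE, inner_toE]
    have e2 : ⟪y - U, matCLM H x⟫ ≤ ‖y - U‖ * ε := by
      calc ⟪y - U, matCLM H x⟫ ≤ ‖y - U‖ * ‖matCLM H x‖ := real_inner_le_norm _ _
      _ ≤ ‖y - U‖ * ε := by
          apply mul_le_mul_of_nonneg_left _ (norm_nonneg _)
          simpa [hx1] using hmH x
    have e3 : ⟪U, matCLM H (x - V)⟫ ≤ ε * t := by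
      calc ⟪U, matCLM H (x - V)⟫ ≤ ‖U‖ * ‖matCLM H (x - V)‖ := real_inner_le_norm _ _
      _ ≤ ε * t := by
          rw [hUn, one_mul, ht]
          exact hmH (x - V)
    rw [e0, e1]; linarith
  have hsplit : ⟪y, matCLM B x⟫ = ⟪y, matCLM A x⟫ + ⟪y, matCLM H x⟫ := by
    rw [hmB x, inner_add_right]
  have hβeq : β = ⟪y, matCLM A x⟫ + ⟪y, matCLM H x⟫ := by rw [h9, hsplit]
  exact arith4 hβeq h10 h11 hyU hδ2 htle hε0 hpos hε' ht0

lemma lower_bound {m n : ℕ} (A : Matrix (Fin m) (Fin n) ℝ)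
    (u : Fin m → ℝ) (v : Fin n → ℝ)
    (hu : u ⬝ᵥ u = 1) (hv : v ⬝ᵥ v = 1)
    (hAv : A *ᵥ v = ‖A‖ • u) :
    ∀ H : Matrix (Fin m) (Fin n) ℝ, ‖A‖ + u ⬝ᵥ (H *ᵥ v) ≤ ‖A + H‖ := by
  intro H
  have e0 : u ⬝ᵥ ((A + H) *ᵥ v) = ‖A‖ + u ⬝ᵥ (H *ᵥ v) := by
    rw [Matrix.add_mulVec, dotProduct_add, hAv, dotProduct_smul, smul_eq_mul,
      hu, mul_one]
  have e1 : u ⬝ᵥ ((A + H) *ᵥ v) ≤ ‖A + H‖ := by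
    calc u ⬝ᵥ ((A + H) *ᵥ v) = ⟪toE u, matCLM (A + H) (toE v)⟫ := by
          rw [matCLM_toE, inner_toE]
    _ ≤ ‖toE u‖ * ‖matCLM (A + H) (toE v)‖ := real_inner_le_norm _ _
    _ ≤ ‖toE u‖ * (‖A + H‖ * ‖toE v‖) :=
        mul_le_mul_of_nonneg_left (matCLM_le _ _) (norm_nonneg _)
    _ = ‖A + H‖ := by rw [norm_toE_eq_one u hu, norm_toE_eq_one v hv, one_mul, mul_one]
  linarith

/-- if the largest singular value `σ = ‖A‖` of a real `m × n` matrix `A`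
is positive and simple (the largest eigenvalue of `AᵀA` has multiplicity one), and
`u, v` are corresponding normalized left and right singular vectors, then the ℓ2
operator norm `B ↦ ‖B‖` (= largest singular value) is Fréchet differentiable at `A`
with derivative the linear map `H ↦ uᵀHv`; in particular `∂σ_max/∂a_{ij} = u(i)·v(j)`. -/
theorem hasFDerivAt_l2OpNorm
    {m n : ℕ} (A : Matrix (Fin m) (Fin n) ℝ)
    (hpos : 0 < ‖A‖)
    (hAA : (Aᵀ * A).IsHermitian)
    (hsimple : ∃! i : Fin n, hAA.eigenvalues i = ⨆ j, hAA.eigenvalues j)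
    (u : Fin m → ℝ) (v : Fin n → ℝ)
    (hu : u ⬝ᵥ u = 1) (hv : v ⬝ᵥ v = 1)
    (hAv : A *ᵥ v = ‖A‖ • u) (hATu : Aᵀ *ᵥ u = ‖A‖ • v) :
    ∃ D : Matrix (Fin m) (Fin n) ℝ →L[ℝ] ℝ,
      HasFDerivAt (fun B : Matrix (Fin m) (Fin n) ℝ => ‖B‖) D A ∧
      (∀ H : Matrix (Fin m) (Fin n) ℝ, D H = u ⬝ᵥ (H *ᵥ v)) ∧
      (∀ (i : Fin m) (j : Fin n), D (Matrix.single i j (1 : ℝ)) = u i * v j) := by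
  classical
  set L : Matrix (Fin m) (Fin n) ℝ →ₗ[ℝ] ℝ :=
    { toFun := fun H => u ⬝ᵥ (H *ᵥ v)
      map_add' := by
        intro H K
        simp [Matrix.add_mulVec, dotProduct_add]
      map_smul' := by
        intro c H
        simp [Matrix.smul_mulVec, dotProduct_smul] } with hL
  set D : Matrix (Fin m) (Fin n) ℝ →L[ℝ] ℝ := LinearMap.toContinuousLinearMap L with hD
  have hDapp : ∀ H : Matrix (Fin m) (Fin n) ℝ, D H = u ⬝ᵥ (H *ᵥ v) := fun H => rfl
  refine ⟨D, ?_, hDapp, ?_⟩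
  · rw [hasFDerivAt_iff_isLittleO_nhds_zero]
    rw [Asymptotics.isLittleO_iff]
    intro c hc
    obtain ⟨δ, hδpos, hδ⟩ := upper_bound A hpos hAA hsimple u v hu hv hAv hATu c hc
    have hev : ∀ᶠ H : Matrix (Fin m) (Fin n) ℝ in nhds 0, ‖H‖ ≤ δ := by
      filter_upwards [Metric.ball_mem_nhds (0 : Matrix (Fin m) (Fin n) ℝ) hδpos] with H hball
      rw [Metric.mem_ball, dist_zero_right] at hball
      exact hball.le
    filter_upwards [hev] with H hH
    have hup := hδ H hH
    have hlo := lower_bound A u v hu hv hAv H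
    rw [hDapp H]
    rw [Real.norm_eq_abs, abs_le]
    constructor
    · have : 0 ≤ c * ‖H‖ := mul_nonneg hc.le (norm_nonneg H)
      linarith
    · linarith
  · intro i j
    rw [hDapp]
    rw [Matrix.single_mulVec, one_mul]
    have : Function.update (0 : Fin m → ℝ) i (v j) = Pi.single i (v j) := rfl
    rw [this, dotProduct_single]
end

section
/- Let α > 0, let K ∈ ℝ^{k×k} be a one-channel convolution kernel, and let M = M(K) ∈ ℝ^{N²×N²} be the associated doubly block banded Toeplitz transformation matrix (defined entrywise by M(K)_{(s−1)N+r,(j−1)N+i} = k_{i−r+m, j−s+m} when 1 ≤ i−r+m ≤ k and 1 ≤ j−s+m ≤ k, and 0 otherwise, with m = ⌈k/2⌉). Assume the largest singular value σ_max(MᵀM − αI) = ‖MᵀM − αI‖ is positive and simple (the largest eigenvalue of (MᵀM − αI)² has multiplicity one), and let u, v ∈ ℝ^{N²} be unit left and right singular vectors for it. For each (p,q) ∈ {1,…,k}², let Ω_{p,q} be the set of index pairs (i,j) ∈ {1,…,N²}² at which the entry of M(·) carries the kernel coefficient k_{p,q} (i.e., those (i,j) with i = (s−1)N+r, j = (j'−1)N+i'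 satisfying i'−r+m = p and j'−s+m = q). Then the function K' ↦ ‖M(K')ᵀM(K') − αI‖ is Fréchet differentiable at K, with partial derivative with respect to k_{p,q} equal to Σ_{(i,j)∈Ω_{p,q}} ( Σ_{t=1}^{N²} u(j)v(t)m_{it} + Σ_{s=1}^{N²} u(s)v(j)m_{is} ) = Σ_{(i,j)∈Ω_{p,q}} ( u(j)·(Mv)(i) + v(j)·(Mu)(i) ), where m_{it} denotes the (i,t) entry of M. -/
open Matrix
open scoped BigOperators
open scoped Matrix.Norms.L2Operator

open Filter
open scoped Topology

set_option linter.unusedVariables false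
set_option linter.unusedSectionVars false
set_option maxHeartbeats 1000000

section AuxLemmas

variable {n : Type*} [Fintype n] [DecidableEq n]


lemma dot_cs (x y : n → ℝ) :
    x ⬝ᵥ y ≤ ‖(EuclideanSpace.equiv n ℝ).symm x‖ * ‖(EuclideanSpace.equiv n ℝ).symm y‖ := by
  have := real_inner_le_norm ((EuclideanSpace.equiv n ℝ).symm x) ((EuclideanSpace.equiv n ℝ).symm y)
  simpa [PiLp.inner_apply, dotProduct, RCLike.inner_apply, mul_comm] using this

lemma enorm_sq' (x : n → ℝ) : ‖(EuclideanSpace.equiv n ℝ).symm x‖ ^ 2 = x ⬝ᵥ x := by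
  rw [EuclideanSpace.norm_eq, Real.sq_sqrt (Finset.sum_nonneg fun i _ => sq_nonneg _)]
  simp [dotProduct, sq]

lemma enorm_one_of_dot {x : n → ℝ} (h : x ⬝ᵥ x = 1) :
    ‖(EuclideanSpace.equiv n ℝ).symm x‖ = 1 := by
  have := enorm_sq' (n := n) x
  rw [h] at this
  nlinarith [norm_nonneg ((EuclideanSpace.equiv n ℝ).symm x)]

lemma abs_dot_le (a b : n → ℝ) :
    |a ⬝ᵥ b| ≤ ‖(EuclideanSpace.equiv n ℝ).symm a‖ * ‖(EuclideanSpace.equiv n ℝ).symm b‖ := by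
  rw [abs_le]
  constructor
  · have h := dot_cs (-a) b
    have hn : ‖(EuclideanSpace.equiv n ℝ).symm (-a)‖ = ‖(EuclideanSpace.equiv n ℝ).symm a‖ := by
      rw [map_neg, norm_neg]
    rw [neg_dotProduct, hn] at h
    linarith
  · exact dot_cs a b

lemma enorm_mulVec_le (B : Matrix n n ℝ) (z : n → ℝ) :
    ‖(EuclideanSpace.equiv n ℝ).symm (B *ᵥ z)‖ ≤ ‖B‖ * ‖(EuclideanSpace.equiv n ℝ).symm z‖ :=
  B.l2_opNorm_mulVec ((EuclideanSpace.equiv n ℝ).symm z)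

lemma dot_mulVec_le (B : Matrix n n ℝ) (x y : n → ℝ) (hx : x ⬝ᵥ x = 1) (hy : y ⬝ᵥ y = 1) :
    x ⬝ᵥ (B *ᵥ y) ≤ ‖B‖ := by
  have h1 := dot_cs x (B *ᵥ y)
  have h2 := enorm_mulVec_le B y
  rw [enorm_one_of_dot hy, mul_one] at h2
  rw [enorm_one_of_dot hx, one_mul] at h1
  linarith

lemma perturb_bound (Δ : Matrix n n ℝ) (x y u v : n → ℝ)
    (hy : y ⬝ᵥ y = 1) (hu : u ⬝ᵥ u = 1) :
    x ⬝ᵥ (Δ *ᵥ y) - u ⬝ᵥ (Δ *ᵥ v)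
      ≤ ‖Δ‖ * (‖(EuclideanSpace.equiv n ℝ).symm (x - u)‖
          + ‖(EuclideanSpace.equiv n ℝ).symm (y - v)‖) := by
  have hid : x ⬝ᵥ (Δ *ᵥ y) - u ⬝ᵥ (Δ *ᵥ v)
      = (x - u) ⬝ᵥ (Δ *ᵥ y) + u ⬝ᵥ (Δ *ᵥ (y - v)) := by
    simp only [sub_dotProduct, Matrix.mulVec_sub, dotProduct_sub]
    ring
  have h1 : (x - u) ⬝ᵥ (Δ *ᵥ y) ≤ ‖(EuclideanSpace.equiv n ℝ).symm (x - u)‖ * ‖Δ‖ := by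
    have := dot_cs (x - u) (Δ *ᵥ y)
    have h2 := enorm_mulVec_le Δ y
    rw [enorm_one_of_dot hy, mul_one] at h2
    calc (x - u) ⬝ᵥ (Δ *ᵥ y) ≤ _ := this
    _ ≤ ‖(EuclideanSpace.equiv n ℝ).symm (x - u)‖ * ‖Δ‖ :=
        mul_le_mul_of_nonneg_left h2 (norm_nonneg _)
  have h2 : u ⬝ᵥ (Δ *ᵥ (y - v)) ≤ ‖Δ‖ * ‖(EuclideanSpace.equiv n ℝ).symm (y - v)‖ := by
    have := dot_cs u (Δ *ᵥ (y - v))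
    rw [enorm_one_of_dot hu, one_mul] at this
    exact this.trans (enorm_mulVec_le Δ (y - v))
  rw [hid]
  nlinarith [norm_nonneg Δ, norm_nonneg ((EuclideanSpace.equiv n ℝ).symm (x - u)),
    norm_nonneg ((EuclideanSpace.equiv n ℝ).symm (y - v))]

-- entry bound and continuity

lemma entry_abs_le (B : Matrix n n ℝ) (i j : n) : |B i j| ≤ ‖B‖ := by
  have hsi : (Pi.single i (1:ℝ)) ⬝ᵥ (Pi.single i (1:ℝ)) = 1 := by
    simp [dotProduct, Pi.single_apply]
  have hsj : (Pi.single j (1:ℝ)) ⬝ᵥ (Pi.single j (1:ℝ)) = 1 := by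
    simp [dotProduct, Pi.single_apply]
  have hval : (Pi.single i (1:ℝ)) ⬝ᵥ (B *ᵥ Pi.single j (1:ℝ)) = B i j := by
    simp [dotProduct, Matrix.mulVec, Pi.single_apply, Finset.mul_sum]
  have := abs_dot_le (Pi.single i (1:ℝ)) (B *ᵥ Pi.single j (1:ℝ))
  rw [hval, enorm_one_of_dot hsi, one_mul] at this
  have h2 := enorm_mulVec_le B (Pi.single j (1:ℝ))
  rw [enorm_one_of_dot hsj, mul_one] at h2
  linarith [le_trans this h2]

lemma entry_continuous (i j : n) : Continuous fun B : Matrix n n ℝ => B i j := by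
  apply (LipschitzWith.of_dist_le_mul (K := 1) ?_).continuous
  intro B C
  rw [Real.dist_eq, dist_eq_norm]
  have := entry_abs_le (B - C) i j
  simpa using this

lemma cont_dot {γ : Type*} [TopologicalSpace γ] {f g : γ → n → ℝ}
    (hf : Continuous f) (hg : Continuous g) : Continuous fun t => f t ⬝ᵥ g t := by
  simp only [dotProduct]
  exact continuous_finset_sum _ fun i _ =>
    ((continuous_apply i).comp hf).mul ((continuous_apply i).comp hg)

lemma cs_eq (a b : n → ℝ) (c : ℝ) (ha : a ⬝ᵥ a = 1) (hab : a ⬝ᵥ b = c)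
    (hb : b ⬝ᵥ b ≤ c ^ 2) : b = c • a := by
  have expand : (b - c • a) ⬝ᵥ (b - c • a)
      = b ⬝ᵥ b - 2 * c * (a ⬝ᵥ b) + c ^ 2 * (a ⬝ᵥ a) := by
    simp only [sub_dotProduct, dotProduct_sub, smul_dotProduct,
      dotProduct_smul, smul_eq_mul, dotProduct_comm b a]
    ring
  have hle : (b - c • a) ⬝ᵥ (b - c • a) ≤ 0 := by
    rw [expand, ha, hab]; nlinarith
  have hge : 0 ≤ (b - c • a) ⬝ᵥ (b - c • a) :=
    Finset.sum_nonneg fun i _ => mul_self_nonneg _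
  have h0 : b - c • a = 0 := dotProduct_self_eq_zero.mp (le_antisymm hle hge)
  linear_combination (norm := module) h0

lemma mulVec_dot_le_sq (A : Matrix n n ℝ) (y : n → ℝ) (hy : y ⬝ᵥ y = 1) :
    (A *ᵥ y) ⬝ᵥ (A *ᵥ y) ≤ ‖A‖ ^ 2 := by
  rw [← enorm_sq' (A *ᵥ y)]
  have hy1 : ‖(EuclideanSpace.equiv n ℝ).symm y‖ = 1 := by
    have := enorm_sq' (n := n) y
    rw [hy] at this
    nlinarith [norm_nonneg ((EuclideanSpace.equiv n ℝ).symm y)]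
  have h := A.l2_opNorm_mulVec ((EuclideanSpace.equiv n ℝ).symm y)
  rw [hy1, mul_one] at h
  have h' : ‖(EuclideanSpace.equiv n ℝ).symm (A *ᵥ y)‖ ≤ ‖A‖ := h
  nlinarith [norm_nonneg ((EuclideanSpace.equiv n ℝ).symm (A *ᵥ y))]

lemma maximizer_unique [Nonempty n]
    (A : Matrix n n ℝ) (hsymm : Aᵀ = A) (hpos : 0 < ‖A‖)
    (hAA : (Aᵀ * A).IsHermitian)
    (hsimple : ∃! i : n, hAA.eigenvalues i = ⨆ j, hAA.eigenvalues j)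
    (u v : n → ℝ) (hu : u ⬝ᵥ u = 1) (hv : v ⬝ᵥ v = 1)
    (hAv : A *ᵥ v = ‖A‖ • u) (hATu : Aᵀ *ᵥ u = ‖A‖ • v)
    (x y : n → ℝ)
    (hx : x ⬝ᵥ x = 1) (hy : y ⬝ᵥ y = 1)
    (hmax : x ⬝ᵥ (A *ᵥ y) = ‖A‖) :
    (x = u ∧ y = v) ∨ (x = -u ∧ y = -v) := by
  set σ := ‖A‖ with hσ
  have hAy : A *ᵥ y = σ • x := cs_eq x (A *ᵥ y) σ hx hmax (mulVec_dot_le_sq A y hy)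
  have hmax' : y ⬝ᵥ (A *ᵥ x) = σ := by
    have h1 : x ⬝ᵥ (A *ᵥ y) = (Aᵀ *ᵥ x) ⬝ᵥ y := by
      rw [Matrix.dotProduct_mulVec, Matrix.mulVec_transpose]
    have h2 : (Aᵀ *ᵥ x) ⬝ᵥ y = y ⬝ᵥ (A *ᵥ x) := by
      rw [hsymm, dotProduct_comm]
    rw [← h2, ← h1, hmax]
  have hAx : A *ᵥ x = σ • y := cs_eq y (A *ᵥ x) σ hy hmax' (mulVec_dot_le_sq A x hx)
  set B := Aᵀ * A with hB
  have hBsymm : Bᵀ = B := by rw [hB, Matrix.transpose_mul, Matrix.transpose_transpose, hsymm]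
  have hBy : B *ᵥ y = (σ ^ 2) • y := by
    rw [hB, ← Matrix.mulVec_mulVec, hAy, Matrix.mulVec_smul, hsymm, hAx, smul_smul, sq]
  have hBv : B *ᵥ v = (σ ^ 2) • v := by
    rw [hB, ← Matrix.mulVec_mulVec, hAv, Matrix.mulVec_smul, hATu, smul_smul, sq]
  set μ := hAA.eigenvalues with hμ
  set Ei : n → (n → ℝ) := fun i => (WithLp.equiv 2 (n → ℝ)) (hAA.eigenvectorBasis i) with hEi
  have hEig : ∀ i, B *ᵥ Ei i = μ i • Ei i := fun i => hAA.mulVec_eigenvectorBasis i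
  have horth : ∀ i j, Ei i ⬝ᵥ Ei j = if i = j then 1 else 0 := by
    intro i j
    have := (orthonormal_iff_ite (𝕜 := ℝ)).mp hAA.eigenvectorBasis.orthonormal i j
    rw [PiLp.inner_apply] at this
    simpa [dotProduct, RCLike.inner_apply, Ei, mul_comm] using this
  have hexp : ∀ w : n → ℝ, ∑ i, ((Ei i ⬝ᵥ w) • Ei i) = w := by
    intro w
    have h := hAA.eigenvectorBasis.sum_repr' ((EuclideanSpace.equiv n ℝ).symm w)
    have h2 : ∀ i, (inner (𝕜 := ℝ) (hAA.eigenvectorBasis i) ((EuclideanSpace.equiv n ℝ).symm w))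
        = Ei i ⬝ᵥ w := by
      intro i
      rw [PiLp.inner_apply]
      simp [dotProduct, RCLike.inner_apply, Ei, mul_comm]
    calc ∑ i, ((Ei i ⬝ᵥ w) • Ei i)
        = ∑ i, ((inner (𝕜 := ℝ) (hAA.eigenvectorBasis i) ((EuclideanSpace.equiv n ℝ).symm w))
            • Ei i) := by
          refine Finset.sum_congr rfl fun i _ => ?_
          rw [h2]
    _ = w := by
      have h' := congrArg (WithLp.ofLp (p := 2)) h
      simpa [Ei, WithLp.ofLp_sum] using h'
  have key : ∀ (w : n → ℝ), B *ᵥ w = (σ ^ 2) • w →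
      ∀ i, μ i * (Ei i ⬝ᵥ w) = σ ^ 2 * (Ei i ⬝ᵥ w) := by
    intro w hw i
    have h1 : Ei i ⬝ᵥ (B *ᵥ w) = (B *ᵥ Ei i) ⬝ᵥ w := by
      rw [Matrix.dotProduct_mulVec, ← Matrix.mulVec_transpose, hBsymm]
    rw [hw, hEig i] at h1
    simpa [dotProduct_smul, smul_dotProduct] using h1.symm
  have hmule : ∀ i, μ i ≤ σ ^ 2 := by
    intro i
    have hunit : Ei i ⬝ᵥ Ei i = 1 := by rw [horth i i, if_pos rfl]
    have h1 : Ei i ⬝ᵥ (B *ᵥ Ei i) = μ i := by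
      rw [hEig i, dotProduct_smul, hunit, smul_eq_mul, mul_one]
    have h2 : Ei i ⬝ᵥ (B *ᵥ Ei i) = (A *ᵥ Ei i) ⬝ᵥ (A *ᵥ Ei i) := by
      rw [hB, ← Matrix.mulVec_mulVec, Matrix.dotProduct_mulVec, Matrix.vecMul_transpose]
    rw [h2] at h1
    rw [← h1]
    exact mulVec_dot_le_sq A (Ei i) hunit
  -- some coefficient of v is nonzero
  have hvne : ∃ i, Ei i ⬝ᵥ v ≠ 0 := by
    by_contra hcon
    push_neg at hcon
    have := hexp v
    simp only [hcon, zero_smul, Finset.sum_const_zero] at this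
    rw [← this] at hv
    simpa using hv
  obtain ⟨i₁, hi₁⟩ := hvne
  have hμi₁ : μ i₁ = σ ^ 2 := by
    have := key v hBv i₁
    rcases mul_eq_mul_right_iff.mp this with h | h
    · exact h
    · exact absurd h hi₁
  have hsup : (⨆ j, μ j) = σ ^ 2 := by
    apply le_antisymm
    · exact ciSup_le hmule
    · rw [← hμi₁]; exact le_ciSup (Set.Finite.bddAbove (Set.finite_range μ)) i₁
  obtain ⟨i₀, hi₀, huniq⟩ := hsimple
  have hμi₀ : μ i₀ = σ ^ 2 := by rw [hi₀, hsup]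
  -- coefficients vanish away from i₀
  have hcoef : ∀ (w : n → ℝ), B *ᵥ w = (σ ^ 2) • w → ∀ i, i ≠ i₀ → Ei i ⬝ᵥ w = 0 := by
    intro w hw i hne
    by_contra hc
    have := key w hw i
    rcases mul_eq_mul_right_iff.mp this with h | h
    · exact hne (huniq i (by show μ i = ⨆ j, μ j; rw [h, hsup]))
    · exact hc h
  have hcollapse : ∀ (w : n → ℝ), B *ᵥ w = (σ ^ 2) • w → w = (Ei i₀ ⬝ᵥ w) • Ei i₀ := by
    intro w hw
    have hsum : ∑ i, ((Ei i ⬝ᵥ w) • Ei i) = (Ei i₀ ⬝ᵥ w) • Ei i₀ :=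
      Finset.sum_eq_single i₀ (fun i _ hne => by rw [hcoef w hw i hne, zero_smul])
        (fun h => absurd (Finset.mem_univ i₀) h)
    exact (hexp w).symm.trans hsum
  set c := Ei i₀ ⬝ᵥ v with hc
  set d := Ei i₀ ⬝ᵥ y with hd
  have hvE : v = c • Ei i₀ := hcollapse v hBv
  have hyE : y = d • Ei i₀ := hcollapse y hBy
  have hunit : Ei i₀ ⬝ᵥ Ei i₀ = 1 := by rw [horth i₀ i₀, if_pos rfl]
  have hc2 : c * c = 1 := by
    have : v ⬝ᵥ v = c * c := by
      rw [hvE]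
      simp [smul_dotProduct, dotProduct_smul, hunit]
    rw [hv] at this; exact this.symm
  have hd2 : d * d = 1 := by
    have : y ⬝ᵥ y = d * d := by
      rw [hyE]
      simp [smul_dotProduct, dotProduct_smul, hunit]
    rw [hy] at this; exact this.symm
  have hyv : y = (d * c) • v := by
    rw [hvE, hyE, smul_smul]
    congr 1
    rw [mul_assoc, hc2, mul_one]
  rcases mul_self_eq_one_iff.mp (by nlinarith : (d * c) * (d * c) = 1) with hdc | hdc
  · left
    have hyv' : y = v := by rw [hyv, hdc, one_smul]
    constructor
    · have h1 : σ • x = σ • u := by rw [← hAy, hyv', hAv]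
      exact smul_right_injective _ (ne_of_gt hpos) h1
    · exact hyv'
  · right
    have hyv' : y = -v := by rw [hyv, hdc]; simp
    constructor
    · have h1 : σ • x = σ • (-u) := by
        rw [← hAy, hyv']
        rw [Matrix.mulVec_neg, hAv]
        simp
      exact smul_right_injective _ (ne_of_gt hpos) h1
    · exact hyv'

lemma clm_norm_attained {E F : Type*} [NormedAddCommGroup E] [NormedSpace ℝ E]
    [NormedAddCommGroup F] [NormedSpace ℝ F] [FiniteDimensional ℝ E] [Nontrivial E]
    (T : E →L[ℝ] F) : ∃ y : E, ‖y‖ = 1 ∧ ‖T y‖ = ‖T‖ := by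
  have hne : (Metric.sphere (0 : E) 1).Nonempty :=
    NormedSpace.sphere_nonempty.mpr zero_le_one
  obtain ⟨y₀, hy₀mem, hy₀max⟩ := (isCompact_sphere (0 : E) 1).exists_isMaxOn hne
    (continuous_norm.comp T.continuous).continuousOn
  have hy₀ : ‖y₀‖ = 1 := mem_sphere_zero_iff_norm.mp hy₀mem
  refine ⟨y₀, hy₀, le_antisymm (by simpa [hy₀] using T.le_opNorm y₀) ?_⟩
  refine T.opNorm_le_bound (norm_nonneg _) fun x => ?_
  rcases eq_or_ne x 0 with rfl | hx
  · simp
  · have hxn : ‖x‖ ≠ 0 := norm_ne_zero_iff.mpr hx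
    have hmem : ‖x‖⁻¹ • x ∈ Metric.sphere (0 : E) 1 := by
      simp [norm_smul, abs_of_nonneg (inv_nonneg.mpr (norm_nonneg x)), inv_mul_cancel₀ hxn]
    have := hy₀max hmem
    simp only [Function.comp_apply, T.map_smul, norm_smul, norm_inv, norm_norm] at this
    calc ‖T x‖ = ‖x‖ * (‖x‖⁻¹ * ‖T x‖) := by field_simp
    _ ≤ ‖x‖ * ‖T y₀‖ := by
        apply mul_le_mul_of_nonneg_left _ (norm_nonneg x)
        simpa [norm_smul] using this
    _ = ‖T y₀‖ * ‖x‖ := mul_comm _ _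

lemma matrix_norm_attained {n : Type*} [Fintype n] [DecidableEq n] [Nonempty n]
    (B : Matrix n n ℝ) (hB : 0 < ‖B‖) :
    ∃ x y : n → ℝ, ‖(EuclideanSpace.equiv n ℝ).symm x‖ = 1 ∧
      ‖(EuclideanSpace.equiv n ℝ).symm y‖ = 1 ∧ x ⬝ᵥ (B *ᵥ y) = ‖B‖ := by
  obtain ⟨y, hy1, hy2⟩ := clm_norm_attained (Matrix.toEuclideanCLM (n := n) (𝕜 := ℝ) B)
  have happ : ∀ z : EuclideanSpace ℝ n, Matrix.toEuclideanCLM (n := n) (𝕜 := ℝ) B z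
      = (EuclideanSpace.equiv n ℝ).symm (B *ᵥ (WithLp.equiv 2 _ z)) := by
    intro z
    rfl
  have hBn : ‖B‖ = ‖Matrix.toEuclideanCLM (n := n) (𝕜 := ℝ) B‖ := Matrix.cstar_norm_def B
  set y' : n → ℝ := WithLp.equiv 2 _ y with hy'
  have hynorm : ‖(EuclideanSpace.equiv n ℝ).symm y'‖ = 1 := hy1
  have hBy : ‖(EuclideanSpace.equiv n ℝ).symm (B *ᵥ y')‖ = ‖B‖ := by
    rw [hBn, ← hy2, happ y]
  refine ⟨‖B‖⁻¹ • (B *ᵥ y'), y', ?_, hynorm, ?_⟩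
  · have : (EuclideanSpace.equiv n ℝ).symm (‖B‖⁻¹ • (B *ᵥ y'))
        = ‖B‖⁻¹ • (EuclideanSpace.equiv n ℝ).symm (B *ᵥ y') := rfl
    rw [this, norm_smul, hBy]
    simp [abs_of_nonneg (inv_nonneg.mpr hB.le), inv_mul_cancel₀ hB.ne']
  · have hsq : (B *ᵥ y') ⬝ᵥ (B *ᵥ y') = ‖B‖ ^ 2 := by
      rw [← enorm_sq', hBy]
    rw [smul_dotProduct, hsq, sq, smul_eq_mul]
    field_simp

lemma norm_fun_hasFDerivAt {E : Type*} [NormedAddCommGroup E] [NormedSpace ℝ E]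
    [FiniteDimensional ℝ E] [Nonempty n]
    (𝔸 : E → Matrix n n ℝ) (hcont : Continuous 𝔸)
    {K : E} {A' : E →L[ℝ] Matrix n n ℝ} (hder : HasFDerivAt 𝔸 A' K)
    (u v : n → ℝ) (hu : u ⬝ᵥ u = 1) (hv : v ⬝ᵥ v = 1)
    (hpos : 0 < ‖𝔸 K‖)
    (hmaxval : u ⬝ᵥ (𝔸 K *ᵥ v) = ‖𝔸 K‖)
    (huniq : ∀ x y : n → ℝ, x ⬝ᵥ x = 1 → y ⬝ᵥ y = 1 → x ⬝ᵥ (𝔸 K *ᵥ y) = ‖𝔸 K‖ →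
      (x = u ∧ y = v) ∨ (x = -u ∧ y = -v))
    (D : E →L[ℝ] ℝ) (hD : ∀ e, D e = u ⬝ᵥ (A' e *ᵥ v)) :
    HasFDerivAt (fun X => ‖𝔸 X‖) D K := by
  classical
  set g : E → ℝ := fun X => u ⬝ᵥ (𝔸 X *ᵥ v) with hg_def
  -- the bundled linear functional B ↦ u ⬝ᵥ (B *ᵥ v)
  set lin : Matrix n n ℝ →ₗ[ℝ] ℝ :=
    { toFun := fun B : Matrix n n ℝ => u ⬝ᵥ (B *ᵥ v)
      map_add' := fun B C => by
        simp [Matrix.add_mulVec, dotProduct_add]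
      map_smul' := fun c B => by
        simp [Matrix.smul_mulVec, dotProduct_smul] } with hlin_def
  have hg : HasFDerivAt g ((LinearMap.toContinuousLinearMap lin).comp A') K := by
    exact ((LinearMap.toContinuousLinearMap lin).hasFDerivAt).comp K hder
  have hDeq : D = (LinearMap.toContinuousLinearMap lin).comp A' := by
    ext e
    rw [hD e]
    rfl
  rw [hDeq]
  apply HasFDerivAt.of_isLittleO
  have hgK : g K = ‖𝔸 K‖ := hmaxval
  -- lower bound: g X ≤ ‖𝔸 X‖
  have hlow : ∀ X, g X ≤ ‖𝔸 X‖ := fun X => dot_mulVec_le (𝔸 X) u v hu hv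
  -- closeness of maximizers
  have hclose : ∀ η > (0:ℝ), ∀ᶠ X in 𝓝 K, ∀ x y : n → ℝ, x ⬝ᵥ x = 1 → y ⬝ᵥ y = 1 →
      x ⬝ᵥ (𝔸 X *ᵥ y) = ‖𝔸 X‖ →
      (‖(EuclideanSpace.equiv n ℝ).symm (x - u)‖
          + ‖(EuclideanSpace.equiv n ℝ).symm (y - v)‖ ≤ η ∨
       ‖(EuclideanSpace.equiv n ℝ).symm (x + u)‖
          + ‖(EuclideanSpace.equiv n ℝ).symm (y + v)‖ ≤ η) := by
    intro η hη
    by_contra hcon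
    set S : ℕ → Set (E × ((n → ℝ) × (n → ℝ))) := fun m =>
      {p | ‖p.1 - K‖ ≤ 1/(m+1) ∧ p.2.1 ⬝ᵥ p.2.1 = 1 ∧ p.2.2 ⬝ᵥ p.2.2 = 1 ∧
        p.2.1 ⬝ᵥ (𝔸 p.1 *ᵥ p.2.2) = ‖𝔸 p.1‖ ∧
        η ≤ ‖(EuclideanSpace.equiv n ℝ).symm (p.2.1 - u)‖
            + ‖(EuclideanSpace.equiv n ℝ).symm (p.2.2 - v)‖ ∧
        η ≤ ‖(EuclideanSpace.equiv n ℝ).symm (p.2.1 + u)‖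
            + ‖(EuclideanSpace.equiv n ℝ).symm (p.2.2 + v)‖} with hS_def
    -- each S m is nonempty
    have hSne : ∀ m, (S m).Nonempty := by
      intro m
      have hball : ¬ (∀ X, dist X K < 1/(m+1) → ∀ x y : n → ℝ, x ⬝ᵥ x = 1 → y ⬝ᵥ y = 1 →
          x ⬝ᵥ (𝔸 X *ᵥ y) = ‖𝔸 X‖ →
          (‖(EuclideanSpace.equiv n ℝ).symm (x - u)‖
              + ‖(EuclideanSpace.equiv n ℝ).symm (y - v)‖ ≤ η ∨
           ‖(EuclideanSpace.equiv n ℝ).symm (x + u)‖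
              + ‖(EuclideanSpace.equiv n ℝ).symm (y + v)‖ ≤ η)) := by
        intro hgood
        apply hcon
        rw [Metric.eventually_nhds_iff]
        exact ⟨1/(m+1), by positivity, fun {X} hX => hgood X hX⟩
      push_neg at hball
      obtain ⟨X, hX, x, y, hx, hy, hmaxeq, hd1, hd2⟩ := hball
      refine ⟨(X, (x, y)), ?_⟩
      refine ⟨?_, hx, hy, hmaxeq, hd1.le, hd2.le⟩
      rw [← dist_eq_norm]
      exact hX.le
    -- each S m is closed
    have hcont1 : Continuous fun p : E × ((n → ℝ) × (n → ℝ)) => 𝔸 p.1 :=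
      hcont.comp continuous_fst
    have hx1 : Continuous fun p : E × ((n → ℝ) × (n → ℝ)) => p.2.1 :=
      continuous_fst.comp continuous_snd
    have hy1 : Continuous fun p : E × ((n → ℝ) × (n → ℝ)) => p.2.2 :=
      continuous_snd.comp continuous_snd
    have hmv : Continuous fun p : E × ((n → ℝ) × (n → ℝ)) => 𝔸 p.1 *ᵥ p.2.2 := by
      apply continuous_pi
      intro i
      simp only [Matrix.mulVec, dotProduct]
      exact continuous_finset_sum _ fun j _ =>
        ((entry_continuous i j).comp hcont1).mul ((continuous_apply j).comp hy1)
    have heq : Continuous fun z : n → ℝ => ‖(EuclideanSpace.equiv n ℝ).symm z‖ :=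
      ((EuclideanSpace.equiv n ℝ).symm : (n → ℝ) →L[ℝ] EuclideanSpace ℝ n).continuous.norm
    have hSclosed : ∀ m, IsClosed (S m) := by
      intro m
      apply IsClosed.inter
      · exact isClosed_le ((continuous_fst.sub continuous_const).norm) continuous_const
      apply IsClosed.inter
      · exact isClosed_eq (cont_dot hx1 hx1) continuous_const
      apply IsClosed.inter
      · exact isClosed_eq (cont_dot hy1 hy1) continuous_const
      apply IsClosed.inter
      · exact isClosed_eq (cont_dot hx1 hmv) hcont1.norm
      apply IsClosed.inter
      · exact isClosed_le continuous_const
          ((heq.comp (hx1.sub continuous_const)).add (heq.comp (hy1.sub continuous_const)))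
      · exact isClosed_le continuous_const
          ((heq.comp (hx1.add continuous_const)).add (heq.comp (hy1.add continuous_const)))
    -- S 0 is compact
    have hbound : ∀ m, S m ⊆ (Metric.closedBall K 1) ×ˢ
        ((Metric.closedBall (0 : n → ℝ) 1) ×ˢ (Metric.closedBall (0 : n → ℝ) 1)) := by
      intro m p hp
      obtain ⟨h1, h2, h3, _, _, _⟩ := hp
      have hsup : ∀ z : n → ℝ, z ⬝ᵥ z = 1 → z ∈ Metric.closedBall (0 : n → ℝ) 1 := by
        intro z hz
        rw [Metric.mem_closedBall, dist_zero_right]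
        rw [pi_norm_le_iff_of_nonneg zero_le_one]
        intro i
        rw [Real.norm_eq_abs, abs_le_one_iff_mul_self_le_one]
        have : z i * z i ≤ z ⬝ᵥ z := by
          unfold dotProduct
          exact Finset.single_le_sum (fun j _ => mul_self_nonneg (z j)) (Finset.mem_univ i)
        rw [hz] at this
        exact this
      refine ⟨?_, hsup _ h2, hsup _ h3⟩
      rw [Metric.mem_closedBall, dist_eq_norm]
      refine h1.trans ?_
      rw [div_le_one (by positivity)]
      linarith [(Nat.cast_nonneg m : (0:ℝ) ≤ m)]
    have hScompact : IsCompact (S 0) := by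
      apply IsCompact.of_isClosed_subset ?_ (hSclosed 0) (hbound 0)
      exact ((isCompact_closedBall K 1).prod
        ((isCompact_closedBall (0 : n → ℝ) 1).prod (isCompact_closedBall (0 : n → ℝ) 1)))
    have hSdec : ∀ m, S (m + 1) ⊆ S m := by
      intro m p hp
      obtain ⟨h1, h2⟩ := hp
      refine ⟨h1.trans ?_, h2⟩
      apply one_div_le_one_div_of_le (by positivity)
      push_cast
      linarith
    obtain ⟨p, hp⟩ := IsCompact.nonempty_iInter_of_sequence_nonempty_isCompact_isClosed
      S hSdec hSne hScompact hSclosed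
    have hpK : p.1 = K := by
      have hle : ∀ m : ℕ, ‖p.1 - K‖ ≤ 1/(m+1) := by
        intro m
        exact (Set.mem_iInter.mp hp m).1
      have : ‖p.1 - K‖ ≤ 0 := by
        by_contra hlt
        push_neg at hlt
        obtain ⟨m, hm⟩ := exists_nat_one_div_lt hlt
        exact absurd (hle m) (by push_cast; push_cast at hm; linarith)
      have := le_antisymm this (norm_nonneg _)
      rwa [norm_sub_eq_zero_iff] at this
    obtain ⟨_, hx, hy, hmaxeq, hd1, hd2⟩ := Set.mem_iInter.mp hp 0
    rw [hpK] at hmaxeq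
    rcases huniq p.2.1 p.2.2 hx hy hmaxeq with ⟨hxu, hyv⟩ | ⟨hxu, hyv⟩
    · rw [hxu, hyv] at hd1
      simp only [sub_self, map_zero, norm_zero, add_zero] at hd1
      linarith
    · rw [hxu, hyv] at hd2
      simp only [neg_add_cancel, map_zero, norm_zero, add_zero] at hd2
      linarith
  -- the main little-o estimate
  obtain ⟨c₀, hc₀⟩ := hder.isBigO_sub.bound
  set c : ℝ := max c₀ 0 + 1 with hc_def
  have hcpos : 0 < c := by positivity
  have hcbound : ∀ᶠ X in 𝓝 K, ‖𝔸 X - 𝔸 K‖ ≤ c * ‖X - K‖ := by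
    filter_upwards [hc₀] with X hX
    have h1 : c₀ * ‖X - K‖ ≤ c * ‖X - K‖ := by
      apply mul_le_mul_of_nonneg_right _ (norm_nonneg _)
      rw [hc_def]
      have := le_max_left c₀ (0:ℝ)
      linarith
    exact le_trans hX h1
  have hposev : ∀ᶠ X in 𝓝 K, 0 < ‖𝔸 X‖ :=
    (hcont.norm.continuousAt (x := K)).eventually_const_lt hpos
  have hsmall : ∀ ε > (0:ℝ), ∀ᶠ X in 𝓝 K, ‖𝔸 X‖ - g X ≤ ε * ‖X - K‖ := by
    intro ε hε
    have hη : (0:ℝ) < ε / c := by positivity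
    filter_upwards [hclose (ε / c) hη, hcbound, hposev] with X hcl hcb hp
    obtain ⟨x, y, hx1, hy1, hmaxeq⟩ := matrix_norm_attained (𝔸 X) hp
    have hx : x ⬝ᵥ x = 1 := by rw [← enorm_sq' x, hx1]; norm_num
    have hy : y ⬝ᵥ y = 1 := by rw [← enorm_sq' y, hy1]; norm_num
    have hsplit : ∀ a b : n → ℝ, a ⬝ᵥ (𝔸 X *ᵥ b)
        = a ⬝ᵥ (𝔸 K *ᵥ b) + a ⬝ᵥ ((𝔸 X - 𝔸 K) *ᵥ b) := by
      intro a b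
      rw [Matrix.sub_mulVec, dotProduct_sub]
      ring
    have hfirst : x ⬝ᵥ (𝔸 K *ᵥ y) - u ⬝ᵥ (𝔸 K *ᵥ v) ≤ 0 := by
      have := dot_mulVec_le (𝔸 K) x y hx hy
      rw [hmaxval]
      linarith
    have hkey : ‖𝔸 X‖ - g X = (x ⬝ᵥ (𝔸 K *ᵥ y) - u ⬝ᵥ (𝔸 K *ᵥ v))
        + (x ⬝ᵥ ((𝔸 X - 𝔸 K) *ᵥ y) - u ⬝ᵥ ((𝔸 X - 𝔸 K) *ᵥ v)) := by
      rw [← hmaxeq]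
      simp only [hg_def]
      rw [hsplit x y, hsplit u v]
      ring
    have hsecond : x ⬝ᵥ ((𝔸 X - 𝔸 K) *ᵥ y) - u ⬝ᵥ ((𝔸 X - 𝔸 K) *ᵥ v)
        ≤ ‖𝔸 X - 𝔸 K‖ * (ε / c) := by
      rcases hcl x y hx hy hmaxeq with hnear | hnear
      · have := perturb_bound (𝔸 X - 𝔸 K) x y u v hy hu
        have h2 : ‖𝔸 X - 𝔸 K‖ * (‖(EuclideanSpace.equiv n ℝ).symm (x - u)‖
            + ‖(EuclideanSpace.equiv n ℝ).symm (y - v)‖) ≤ ‖𝔸 X - 𝔸 K‖ * (ε / c) :=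
          mul_le_mul_of_nonneg_left hnear (norm_nonneg _)
        linarith
      · have hunn : (-u) ⬝ᵥ (-u) = 1 := by
          rw [neg_dotProduct, dotProduct_neg, neg_neg, hu]
        have := perturb_bound (𝔸 X - 𝔸 K) x y (-u) (-v) hy hunn
        have hflip : (-u) ⬝ᵥ ((𝔸 X - 𝔸 K) *ᵥ (-v)) = u ⬝ᵥ ((𝔸 X - 𝔸 K) *ᵥ v) := by
          rw [Matrix.mulVec_neg, neg_dotProduct, dotProduct_neg, neg_neg]
        rw [hflip, sub_neg_eq_add, sub_neg_eq_add] at this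
        have h2 : ‖𝔸 X - 𝔸 K‖ * (‖(EuclideanSpace.equiv n ℝ).symm (x + u)‖
            + ‖(EuclideanSpace.equiv n ℝ).symm (y + v)‖) ≤ ‖𝔸 X - 𝔸 K‖ * (ε / c) :=
          mul_le_mul_of_nonneg_left hnear (norm_nonneg _)
        linarith
    have hnorm2 : ‖𝔸 X - 𝔸 K‖ * (ε / c) ≤ ε * ‖X - K‖ := by
      have h3 : ‖𝔸 X - 𝔸 K‖ * (ε / c) ≤ (c * ‖X - K‖) * (ε / c) :=
        mul_le_mul_of_nonneg_right hcb (le_of_lt hη)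
      calc ‖𝔸 X - 𝔸 K‖ * (ε / c) ≤ (c * ‖X - K‖) * (ε / c) := h3
      _ = ε * ‖X - K‖ := by field_simp
    linarith [hkey, hfirst, hsecond, hnorm2]
  -- assemble
  have hfg : (fun X => ‖𝔸 X‖ - g X) =o[𝓝 K] fun X => X - K := by
    rw [Asymptotics.isLittleO_iff]
    intro ε hε
    filter_upwards [hsmall ε hε] with X hX
    rw [Real.norm_eq_abs, abs_of_nonneg (by linarith [hlow X])]
    calc ‖𝔸 X‖ - g X ≤ ε * ‖X - K‖ := hX
    _ = ε * ‖X - K‖ := rfl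
  have hgo : (fun X => g X - g K
      - ((LinearMap.toContinuousLinearMap lin).comp A') (X - K)) =o[𝓝 K] fun X => X - K :=
    hg.isLittleO
  have := hfg.add hgo
  apply this.congr' ?_ (EventuallyEq.refl _ _)
  apply Eventually.of_forall
  intro X
  rw [hgK]
  ring

end AuxLemmas

/-- Zero-padded, 1-based access to the `k × k` kernel. -/
def kerEntry {k : ℕ} (K : Fin k → Fin k → ℝ) (p q : ℤ) : ℝ :=
  if h : 1 ≤ p ∧ p ≤ k ∧ 1 ≤ q ∧ q ≤ k then
    K ⟨(p - 1).toNat, by omega⟩ ⟨(q - 1).toNat, by omega⟩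
  else 0

/-- The `N² × N²` doubly block banded Toeplitz transformation matrix `M(K)`:
`M(K)_{(s-1)N+r, (j-1)N+i} = k_{i-r+m, j-s+m}` when `1 ≤ i-r+m ≤ k` and
`1 ≤ j-s+m ≤ k` (with `m = ⌈k/2⌉`), and `0` otherwise; 0-based row index
`a = (s-1)N+(r-1)` and column index `b = (j-1)N+(i-1)`. -/
def convMatrix (N : ℕ) {k : ℕ} (K : Fin k → Fin k → ℝ) :
    Matrix (Fin (N * N)) (Fin (N * N)) ℝ := fun a b =>
  kerEntry K ((((b : ℕ) % N : ℕ) : ℤ) - (((a : ℕ) % N : ℕ) : ℤ) + ⌈(k : ℚ) / 2⌉)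
             ((((b : ℕ) / N : ℕ) : ℤ) - (((a : ℕ) / N : ℕ) : ℤ) + ⌈(k : ℚ) / 2⌉)

/-- `Ω_{p,q}` (for 0-based `p q : Fin k`): the set of index pairs `(i, j)` at which
the entry of `M(·)` carries the kernel coefficient `k_{p,q}`. -/
def kernelIndexSet (N : ℕ) (k : ℕ) (p q : Fin k) :
    Finset (Fin (N * N) × Fin (N * N)) :=
  Finset.univ.filter (fun ij =>
    (((ij.2 : ℕ) % N : ℕ) : ℤ) - (((ij.1 : ℕ) % N : ℕ) : ℤ) + ⌈(k : ℚ) / 2⌉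
        = (p : ℤ) + 1 ∧
    (((ij.2 : ℕ) / N : ℕ) : ℤ) - (((ij.1 : ℕ) / N : ℕ) : ℤ) + ⌈(k : ℚ) / 2⌉
        = (q : ℤ) + 1)

lemma kerEntry_add {k : ℕ} (X Y : Fin k → Fin k → ℝ) (p q : ℤ) :
    kerEntry (X + Y) p q = kerEntry X p q + kerEntry Y p q := by
  unfold kerEntry
  split <;> simp

lemma kerEntry_smul {k : ℕ} (c : ℝ) (X : Fin k → Fin k → ℝ) (p q : ℤ) :
    kerEntry (c • X) p q = c * kerEntry X p q := by
  unfold kerEntry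
  split <;> simp

noncomputable def convLM (N : ℕ) (k : ℕ) :
    (Fin k → Fin k → ℝ) →ₗ[ℝ] Matrix (Fin (N * N)) (Fin (N * N)) ℝ where
  toFun := convMatrix N
  map_add' X Y := by
    ext a b
    simp [convMatrix, kerEntry_add]
  map_smul' c X := by
    ext a b
    simp [convMatrix, kerEntry_smul]

noncomputable def convTLM (N : ℕ) (k : ℕ) :
    (Fin k → Fin k → ℝ) →ₗ[ℝ] Matrix (Fin (N * N)) (Fin (N * N)) ℝ where
  toFun X := (convMatrix N X)ᵀ
  map_add' X Y := by
    show ((convLM N k) (X + Y))ᵀ = ((convLM N k) X)ᵀ + ((convLM N k) Y)ᵀ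
    rw [map_add, Matrix.transpose_add]
  map_smul' c X := by
    show ((convLM N k) (c • X))ᵀ = c • ((convLM N k) X)ᵀ
    rw [_root_.map_smul, Matrix.transpose_smul]

lemma convMatrix_basis_entry {N k : ℕ} (p q : Fin k) (a b : Fin (N * N)) :
    convMatrix N (fun p' q' => if p' = p ∧ q' = q then (1 : ℝ) else 0) a b
      = if (a, b) ∈ kernelIndexSet N k p q then 1 else 0 := by
  have hmem : (a, b) ∈ kernelIndexSet N k p q ↔
      ((((b : ℕ) % N : ℕ) : ℤ) - (((a : ℕ) % N : ℕ) : ℤ) + ⌈(k : ℚ) / 2⌉ = (p : ℤ) + 1 ∧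
       (((b : ℕ) / N : ℕ) : ℤ) - (((a : ℕ) / N : ℕ) : ℤ) + ⌈(k : ℚ) / 2⌉ = (q : ℤ) + 1) := by
    simp [kernelIndexSet]
  rw [convMatrix, kerEntry]
  set P : ℤ := (((b : ℕ) % N : ℕ) : ℤ) - (((a : ℕ) % N : ℕ) : ℤ) + ⌈(k : ℚ) / 2⌉ with hP
  set Q : ℤ := (((b : ℕ) / N : ℕ) : ℤ) - (((a : ℕ) / N : ℕ) : ℤ) + ⌈(k : ℚ) / 2⌉ with hQ
  have hp := p.isLt
  have hq := q.isLt
  split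
  · rename_i h
    obtain ⟨h1, h2, h3, h4⟩ := h
    have hfin : ((⟨(P - 1).toNat, by omega⟩ : Fin k) = p ∧ (⟨(Q - 1).toNat, by omega⟩ : Fin k) = q)
        ↔ (P = (p : ℤ) + 1 ∧ Q = (q : ℤ) + 1) := by
      constructor
      · rintro ⟨hh1, hh2⟩
        have e1 : (P - 1).toNat = (p : ℕ) := congrArg Fin.val hh1
        have e2 : (Q - 1).toNat = (q : ℕ) := congrArg Fin.val hh2
        omega
      · rintro ⟨hh1, hh2⟩
        constructor
        · apply Fin.ext; simp; omega
        · apply Fin.ext; simp; omega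
    simp only [hmem]
    by_cases hc : P = (p : ℤ) + 1 ∧ Q = (q : ℤ) + 1
    · rw [if_pos (hfin.mpr hc), if_pos hc]
    · rw [if_neg (fun hx => hc (hfin.mp hx)), if_neg hc]
  · rename_i h
    have hnm : ¬((a, b) ∈ kernelIndexSet N k p q) := by
      rw [hmem]
      rintro ⟨hh1, hh2⟩
      exact h (by omega)
    rw [if_neg hnm]

/-- with `M = M(K)` the transformation matrix of the one-channel
kernel `K`, if `σ_max(MᵀM - αI) = ‖MᵀM - αI‖` is positive and simple and `u, v`
are unit left and right singular vectors for it, then `K' ↦ ‖M(K')ᵀM(K') - αI‖`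
is Fréchet differentiable at `K`, with partial derivative with respect to
`k_{p,q}` equal to
`Σ_{(i,j)∈Ω_{p,q}} ( Σ_t u(j)v(t)m_{it} + Σ_s u(s)v(j)m_{is} )`. -/
theorem hasFDerivAt_conv_penalty {k N : ℕ} (hN : 1 ≤ N)
    (α : ℝ) (hα : 0 < α)
    (K : Fin k → Fin k → ℝ)
    (M : Matrix (Fin (N * N)) (Fin (N * N)) ℝ) (hM : M = convMatrix N K)
    (A : Matrix (Fin (N * N)) (Fin (N * N)) ℝ)
    (hA : A = Mᵀ * M - α • (1 : Matrix (Fin (N * N)) (Fin (N * N)) ℝ))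
    (hpos : 0 < ‖A‖)
    (hAA : (Aᵀ * A).IsHermitian)
    (hsimple : ∃! i : Fin (N * N), hAA.eigenvalues i = ⨆ j, hAA.eigenvalues j)
    (u v : Fin (N * N) → ℝ)
    (hu : u ⬝ᵥ u = 1) (hv : v ⬝ᵥ v = 1)
    (hAv : A *ᵥ v = ‖A‖ • u) (hATu : Aᵀ *ᵥ u = ‖A‖ • v) :
    ∃ D : (Fin k → Fin k → ℝ) →L[ℝ] ℝ,
      HasFDerivAt
        (fun K' : Fin k → Fin k → ℝ =>
          ‖(convMatrix N K')ᵀ * convMatrix N K' -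
              α • (1 : Matrix (Fin (N * N)) (Fin (N * N)) ℝ)‖) D K ∧
      ∀ p q : Fin k,
        D (fun p' q' => if p' = p ∧ q' = q then (1 : ℝ) else 0) =
          ∑ ij ∈ kernelIndexSet N k p q,
            ((∑ t : Fin (N * N), u ij.2 * v t * M ij.1 t) +
              (∑ s : Fin (N * N), u s * v ij.2 * M ij.1 s)) := by
  classical
  have hn : 0 < N * N := Nat.mul_pos hN hN
  haveI : Nonempty (Fin (N * N)) := ⟨⟨0, hn⟩⟩
  set 𝔸 : (Fin k → Fin k → ℝ) → Matrix (Fin (N * N)) (Fin (N * N)) ℝ :=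
    fun X => (convMatrix N X)ᵀ * convMatrix N X
      - α • (1 : Matrix (Fin (N * N)) (Fin (N * N)) ℝ) with h𝔸
  set Cc : (Fin k → Fin k → ℝ) →L[ℝ] Matrix (Fin (N * N)) (Fin (N * N)) ℝ :=
    LinearMap.toContinuousLinearMap (convLM N k) with hCc
  set Tc : (Fin k → Fin k → ℝ) →L[ℝ] Matrix (Fin (N * N)) (Fin (N * N)) ℝ :=
    LinearMap.toContinuousLinearMap (convTLM N k) with hTc
  have hTcval : ∀ X, Tc X = (convMatrix N X)ᵀ := fun _ => rfl
  have hCcval : ∀ X, Cc X = convMatrix N X := fun _ => rfl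
  have hcont : Continuous 𝔸 := by
    have h : Continuous fun X : Fin k → Fin k → ℝ =>
        Tc X * Cc X - α • (1 : Matrix (Fin (N * N)) (Fin (N * N)) ℝ) :=
      (Tc.continuous.mul Cc.continuous).sub continuous_const
    exact h
  set Ader : (Fin k → Fin k → ℝ) →L[ℝ] Matrix (Fin (N * N)) (Fin (N * N)) ℝ :=
    Tc K • Cc + Tc.smulRight (Cc K) with hAder_def
  have hAder : HasFDerivAt 𝔸 Ader K := by
    have h1 : HasFDerivAt (fun y => Tc y * Cc y) (Tc K • Cc + Tc.smulRight (Cc K)) K :=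
      (Tc.hasFDerivAt).mul' (Cc.hasFDerivAt)
    have h2 := h1.sub_const (α • (1 : Matrix (Fin (N * N)) (Fin (N * N)) ℝ))
    exact h2
  have hAderval : ∀ e, Ader e = (convMatrix N K)ᵀ * convMatrix N e
      + (convMatrix N e)ᵀ * convMatrix N K := by
    intro e
    rw [hAder_def]
    rw [ContinuousLinearMap.add_apply, ContinuousLinearMap.smul_apply,
      ContinuousLinearMap.smulRight_apply]
    rw [hTcval, hCcval, hTcval, hCcval, smul_eq_mul, smul_eq_mul]
  have hAK : 𝔸 K = A := by rw [h𝔸, hA, hM]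
  have hsymm : Aᵀ = A := by
    rw [hA]
    rw [Matrix.transpose_sub, Matrix.transpose_mul, Matrix.transpose_transpose,
      Matrix.transpose_smul, Matrix.transpose_one]
  have hmaxval : u ⬝ᵥ (𝔸 K *ᵥ v) = ‖𝔸 K‖ := by
    rw [hAK, hAv, dotProduct_smul, hu, smul_eq_mul, mul_one]
  set lin : Matrix (Fin (N * N)) (Fin (N * N)) ℝ →ₗ[ℝ] ℝ :=
    { toFun := fun B => u ⬝ᵥ (B *ᵥ v)
      map_add' := fun B C => by simp [Matrix.add_mulVec, dotProduct_add]
      map_smul' := fun c B => by simp [Matrix.smul_mulVec, dotProduct_smul] }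
    with hlin
  set D : (Fin k → Fin k → ℝ) →L[ℝ] ℝ :=
    (LinearMap.toContinuousLinearMap lin).comp Ader with hD_def
  have hD : ∀ e, D e = u ⬝ᵥ (Ader e *ᵥ v) := fun _ => rfl
  refine ⟨D, ?_, ?_⟩
  · have hpos' : 0 < ‖𝔸 K‖ := by rw [hAK]; exact hpos
    have huniq : ∀ x y : Fin (N * N) → ℝ, x ⬝ᵥ x = 1 → y ⬝ᵥ y = 1 →
        x ⬝ᵥ (𝔸 K *ᵥ y) = ‖𝔸 K‖ → (x = u ∧ y = v) ∨ (x = -u ∧ y = -v) := by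
      intro x y hx hy hmax
      rw [hAK] at hmax
      exact maximizer_unique A hsymm hpos hAA hsimple u v hu hv hAv hATu x y hx hy hmax
    exact norm_fun_hasFDerivAt 𝔸 hcont hAder u v hu hv hpos' hmaxval huniq D hD
  · intro p q
    set δ : Fin k → Fin k → ℝ := fun p' q' => if p' = p ∧ q' = q then (1 : ℝ) else 0 with hδ
    set Cδ := convMatrix N δ with hCδ
    have hsum : ∀ w z : Fin (N * N) → ℝ,
        (Cδ *ᵥ w) ⬝ᵥ z = ∑ ij ∈ kernelIndexSet N k p q, w ij.2 * z ij.1 := by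
      intro w z
      have step1 : (Cδ *ᵥ w) ⬝ᵥ z
          = ∑ a, ∑ b, (if (a, b) ∈ kernelIndexSet N k p q then w b * z a else 0) := by
        simp only [dotProduct, Matrix.mulVec, Finset.sum_mul, hCδ, hδ,
          convMatrix_basis_entry, ite_mul, one_mul, zero_mul]
      have step2 : ∑ ij ∈ kernelIndexSet N k p q, w ij.2 * z ij.1
          = ∑ a, ∑ b, (if (a, b) ∈ kernelIndexSet N k p q then w b * z a else 0) := by
        conv_lhs => rw [← Finset.univ_inter (kernelIndexSet N k p q), ← Finset.sum_ite_mem]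
        rw [Fintype.sum_prod_type]
      rw [step1, step2]
    have hDval : D δ = (M *ᵥ u) ⬝ᵥ (Cδ *ᵥ v) + (Cδ *ᵥ u) ⬝ᵥ (M *ᵥ v) := by
      rw [hD δ, hAderval δ, ← hM, ← hCδ]
      rw [Matrix.add_mulVec, dotProduct_add, ← Matrix.mulVec_mulVec,
        ← Matrix.mulVec_mulVec]
      congr 1
      · rw [Matrix.dotProduct_mulVec, Matrix.vecMul_transpose]
      · rw [Matrix.dotProduct_mulVec, Matrix.vecMul_transpose]
    rw [hDval]
    have h1 : (M *ᵥ u) ⬝ᵥ (Cδ *ᵥ v) = ∑ ij ∈ kernelIndexSet N k p q,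
        v ij.2 * (M *ᵥ u) ij.1 := by
      rw [dotProduct_comm]
      exact hsum v (M *ᵥ u)
    have h2 : (Cδ *ᵥ u) ⬝ᵥ (M *ᵥ v) = ∑ ij ∈ kernelIndexSet N k p q,
        u ij.2 * (M *ᵥ v) ij.1 := hsum u (M *ᵥ v)
    rw [h1, h2, ← Finset.sum_add_distrib]
    apply Finset.sum_congr rfl
    intro ij _
    have hT1 : (∑ t : Fin (N * N), u ij.2 * v t * M ij.1 t) = u ij.2 * (M *ᵥ v) ij.1 := by
      simp only [Matrix.mulVec, dotProduct, Finset.mul_sum]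
      exact Finset.sum_congr rfl fun t _ => by ring
    have hT2 : (∑ s : Fin (N * N), u s * v ij.2 * M ij.1 s) = v ij.2 * (M *ᵥ u) ij.1 := by
      simp only [Matrix.mulVec, dotProduct, Finset.mul_sum]
      exact Finset.sum_congr rfl fun s _ => by ring
    rw [hT1, hT2]
    ring
end
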